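/- arXiv:2206.04774 — 6 statements merged into one kernel-verified Lean document; each statement's English description precedes it below -/
import Mathlib

section
/- The order polytope O(P) of a finite poset P with p elements has Euclidean volume e(P)/p!, where e(P) is the number of linear extensions of P. -/
open MeasureTheory

/-- The number of linear extensions of a finite poset `P`: enumerations
`x_{σ(1)}, …, x_{σ(p)}` of `P` compatible with the partial order. -/
noncomputable def numLinExt (P : Type*) [Fintype P] [PartialOrder P] : ℕ :=
  Nat.card {σ : Fin (Fintype.card P) ≃ P // ∀ i j, σ i ≤ σ j → i ≤ j}

/-- Every injective real-valued function on a finite type can be sorted: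
there is an enumeration along which it is strictly increasing. -/
theorem exists_strictMono_comp_of_injective {P : Type*} [Fintype P] {f : P → ℝ}
    (hf : Function.Injective f) :
    ∃ σ : Fin (Fintype.card P) ≃ P, StrictMono (f ∘ σ) := by
  classical
  set n := Fintype.card P with hn
  set F : Finset ℝ := Finset.univ.image f with hF
  have hFcard : F.card = n := by
    rw [hF, Finset.card_image_of_injective _ hf, Finset.card_univ]
  set e := F.orderIsoOfFin hFcard with he
  have hmem : ∀ i : Fin n, ((e i : ℝ)) ∈ F := fun i => (e i).2
  choose g hg1 hg2 using fun i => Finset.mem_image.mp (hmem i)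
  have hsm : StrictMono (f ∘ g) := by
    have hfg : (f ∘ g) = fun i => (e i : ℝ) := funext fun i => hg2 i
    rw [hfg]
    exact fun i j hij => Subtype.coe_lt_coe.mpr (e.strictMono hij)
  have hginj : Function.Injective g := fun i j h => hsm.injective (by simp [Function.comp, h])
  have hbij : Function.Bijective g :=
    (Fintype.bijective_iff_injective_and_card g).mpr ⟨hginj, by simp [hn]⟩
  exact ⟨Equiv.ofBijective g hbij, hsm⟩

/-- Functions with two equal coordinates form a null set. -/
theorem volume_eq_coords_eq_zero {P : Type*} [Fintype P] {x y : P} (hxy : x ≠ y) :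
    volume {f : P → ℝ | f x = f y} = 0 := by
  classical
  set L : (P → ℝ) →ₗ[ℝ] ℝ :=
    (LinearMap.proj x : (P → ℝ) →ₗ[ℝ] ℝ) - (LinearMap.proj y : (P → ℝ) →ₗ[ℝ] ℝ) with hL
  have hker : {f : P → ℝ | f x = f y} = (LinearMap.ker L : Set (P → ℝ)) := by
    ext f; simp [hL, LinearMap.mem_ker, sub_eq_zero]
  rw [hker]
  refine Measure.addHaar_submodule _ _ ?_
  intro h
  have h1 : Pi.single x (1:ℝ) ∈ LinearMap.ker L := h ▸ Submodule.mem_top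
  simp [hL, Pi.single_eq_same, Pi.single_eq_of_ne (Ne.symm hxy)] at h1

/-- Non-injective functions form a null set. -/
theorem volume_not_injective_zero {P : Type*} [Fintype P] :
    volume {f : P → ℝ | ¬ Function.Injective f} = 0 := by
  classical
  have hsub : {f : P → ℝ | ¬ Function.Injective f} ⊆
      ⋃ (x : P) (y : P) (_ : x ≠ y), {f : P → ℝ | f x = f y} := by
    intro f hf
    simp only [Set.mem_setOf_eq, Function.Injective, not_forall] at hf
    obtain ⟨x, y, hxy, hne⟩ := hf
    exact Set.mem_iUnion.mpr ⟨x, Set.mem_iUnion.mpr ⟨y, Set.mem_iUnion.mpr ⟨hne, hxy⟩⟩⟩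
  refine measure_mono_null hsub ?_
  refine measure_iUnion_null fun x => measure_iUnion_null fun y => measure_iUnion_null fun hxy =>
    volume_eq_coords_eq_zero hxy

/-- The order polytope of a finite poset with `p` elements has volume `e(P)/p!`. -/
theorem volume_orderPolytope (P : Type*) [Fintype P] [PartialOrder P] :
    volume {f : P → ℝ | (∀ x, f x ∈ Set.Icc (0:ℝ) 1) ∧ ∀ x y, x ≤ y → f x ≤ f y}
      = (numLinExt P : ENNReal) / (Nat.factorial (Fintype.card P) : ENNReal) := by
  classical
  set n := Fintype.card P with hn
  set N : Set (P → ℝ) := {f | ¬ Function.Injective f} with hNdef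
  set S : (Fin n ≃ P) → Set (P → ℝ) :=
    fun σ => {f | (∀ x, f x ∈ Set.Icc (0:ℝ) 1) ∧ StrictMono (f ∘ σ)} with hSdef
  -- membership in S σ forces injectivity
  have hinj : ∀ (σ : Fin n ≃ P) (f : P → ℝ), f ∈ S σ → Function.Injective f := by
    intro σ f hf
    have hfe : f = (f ∘ ⇑σ) ∘ ⇑σ.symm := by funext x; simp
    rw [hfe]
    exact hf.2.injective.comp σ.symm.injective
  -- the sets S σ are pairwise disjoint
  have hdisj : Pairwise (Function.onFun Disjoint S) := by
    intro σ τ hne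
    rw [Function.onFun, Set.disjoint_left]
    intro f hfσ hfτ
    apply hne
    have h1 : StrictMono (f ∘ ⇑σ) := hfσ.2
    have h2 : StrictMono (f ∘ ⇑τ) := hfτ.2
    have hr : Set.range (f ∘ ⇑σ) = Set.range (f ∘ ⇑τ) := by
      rw [Set.range_comp, Set.range_comp, Equiv.range_eq_univ, Equiv.range_eq_univ]
    haveI : WellFoundedLT (Fin n) := inferInstance
    have heq : (f ∘ ⇑σ) = (f ∘ ⇑τ) := (h1.range_inj h2).mp hr
    have hfinj : Function.Injective f := hinj σ f hfσ
    exact Equiv.ext fun i => hfinj (congrFun heq i)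
  -- measurability of S σ
  have hSmeas : ∀ σ : Fin n ≃ P, MeasurableSet (S σ) := by
    intro σ
    have h1 : MeasurableSet {f : P → ℝ | ∀ x, f x ∈ Set.Icc (0:ℝ) 1} := by
      have h : {f : P → ℝ | ∀ x, f x ∈ Set.Icc (0:ℝ) 1}
          = Set.pi Set.univ (fun _ => Set.Icc (0:ℝ) 1) := by
        ext f; simp only [Set.mem_setOf_eq, Set.mem_pi, Set.mem_univ, true_implies]
      rw [h]
      exact MeasurableSet.univ_pi fun _ => measurableSet_Icc
    have h2 : MeasurableSet {f : P → ℝ | StrictMono (f ∘ ⇑σ)} := by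
      have h : {f : P → ℝ | StrictMono (f ∘ ⇑σ)}
          = ⋂ (i : Fin n), ⋂ (j : Fin n), {f : P → ℝ | i < j → f (σ i) < f (σ j)} := by
        ext f; simp [StrictMono, Set.mem_iInter]
      rw [h]
      refine MeasurableSet.iInter fun i => MeasurableSet.iInter fun j => ?_
      by_cases hij : i < j
      · simp only [hij, true_implies]
        exact measurableSet_lt (measurable_pi_apply _) (measurable_pi_apply _)
      · simp only [hij, false_implies]
        exact MeasurableSet.univ.congr (by ext f; simp)
    have h : S σ = {f : P → ℝ | ∀ x, f x ∈ Set.Icc (0:ℝ) 1}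
        ∩ {f : P → ℝ | StrictMono (f ∘ ⇑σ)} := by
      ext f; simp [hSdef, Set.mem_setOf_eq]
    rw [h]
    exact h1.inter h2
  -- all S σ have the same volume, namely that of the standard simplex in Fin n → ℝ
  set T : Set (Fin n → ℝ) := {g | (∀ i, g i ∈ Set.Icc (0:ℝ) 1) ∧ StrictMono g} with hTdef
  have hSvol : ∀ σ : Fin n ≃ P, volume (S σ) = volume T := by
    intro σ
    have hmp := volume_measurePreserving_piCongrLeft (fun _ : P => ℝ) σ
    have happ : ∀ (g : Fin n → ℝ) (x : P),
        (MeasurableEquiv.piCongrLeft (fun _ : P => ℝ) σ) g x = g (σ.symm x) := by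
      intro g x
      conv_lhs => rw [← σ.apply_symm_apply x]
      simp [MeasurableEquiv.piCongrLeft, Equiv.piCongrLeft_apply_apply]
      rw [Equiv.piCongrLeft_apply_eq_cast, cast_eq]
    have hpre : (MeasurableEquiv.piCongrLeft (fun _ : P => ℝ) σ) ⁻¹' (S σ) = T := by
      ext g
      have hcomp : ((MeasurableEquiv.piCongrLeft (fun _ : P => ℝ) σ) g) ∘ ⇑σ = g := by
        funext i
        rw [Function.comp_apply, happ, Equiv.symm_apply_apply]
      simp only [Set.mem_preimage, hSdef, Set.mem_setOf_eq, hTdef, hcomp]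
      constructor
      · rintro ⟨hb, hs⟩
        refine ⟨fun i => ?_, hs⟩
        have := hb (σ i)
        rwa [happ, Equiv.symm_apply_apply] at this
      · rintro ⟨hb, hs⟩
        refine ⟨fun x => ?_, hs⟩
        rw [happ]
        exact hb _
    calc volume (S σ)
        = volume ((MeasurableEquiv.piCongrLeft (fun _ : P => ℝ) σ) ⁻¹' (S σ)) :=
          (hmp.measure_preimage (hSmeas σ).nullMeasurableSet).symm
      _ = volume T := by rw [hpre]
  -- the cube has volume one, and decomposes (a.e.) into the S σ
  have hC : volume {f : P → ℝ | ∀ x, f x ∈ Set.Icc (0:ℝ) 1} = 1 := by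
    have h : {f : P → ℝ | ∀ x, f x ∈ Set.Icc (0:ℝ) 1}
        = Set.pi Set.univ (fun _ => Set.Icc (0:ℝ) 1) := by
      ext f; simp only [Set.mem_setOf_eq, Set.mem_pi, Set.mem_univ, true_implies]
    rw [h, volume_pi_pi]
    simp [Real.volume_Icc]
  have hN : volume N = 0 := volume_not_injective_zero
  have hcover : {f : P → ℝ | ∀ x, f x ∈ Set.Icc (0:ℝ) 1} \ N = ⋃ σ : Fin n ≃ P, S σ := by
    ext f
    simp only [Set.mem_diff, Set.mem_setOf_eq, hNdef, not_not, Set.mem_iUnion, hSdef]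
    constructor
    · rintro ⟨hb, hfi⟩
      obtain ⟨σ, hσ⟩ := exists_strictMono_comp_of_injective hfi
      exact ⟨σ, hb, hσ⟩
    · rintro ⟨σ, hb, hσ⟩
      exact ⟨hb, hinj σ f ⟨hb, hσ⟩⟩
  -- hence n! · vol T = 1
  have hTvol : (n.factorial : ENNReal) * volume T = 1 := by
    have h1 : volume (⋃ σ : Fin n ≃ P, S σ) = 1 := by
      rw [← hcover, measure_diff_null hN, hC]
    rw [measure_iUnion hdisj hSmeas] at h1
    simp only [hSvol] at h1
    rw [tsum_fintype, Finset.sum_const, Finset.card_univ, nsmul_eq_mul] at h1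
    rw [Fintype.card_equiv (Fintype.equivFin P).symm, Fintype.card_fin] at h1
    exact h1
  have hTval : volume T = 1 / (n.factorial : ENNReal) := by
    rw [ENNReal.eq_div_iff (by exact_mod_cast n.factorial_ne_zero) (ENNReal.natCast_ne_top _)]
    exact hTvol
  -- the polytope decomposes (a.e.) into the S σ for σ a linear extension
  set Lin := {σ : Fin n ≃ P // ∀ i j, σ i ≤ σ j → i ≤ j} with hLin
  have hOcover : {f : P → ℝ | (∀ x, f x ∈ Set.Icc (0:ℝ) 1) ∧ ∀ x y, x ≤ y → f x ≤ f y} \ N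
      = ⋃ σ : Lin, S σ.1 := by
    ext f
    simp only [Set.mem_diff, Set.mem_setOf_eq, hNdef, not_not, Set.mem_iUnion, hSdef]
    constructor
    · rintro ⟨⟨hb, hmono⟩, hfi⟩
      obtain ⟨σ, hσ⟩ := exists_strictMono_comp_of_injective hfi
      refine ⟨⟨σ, ?_⟩, hb, hσ⟩
      intro i j hij
      by_contra hc
      push_neg at hc
      exact absurd (hmono _ _ hij) (not_le.mpr (hσ hc))
    · rintro ⟨⟨σ, hcompat⟩, hb, hσ⟩
      refine ⟨⟨hb, ?_⟩, hinj σ f ⟨hb, hσ⟩⟩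
      intro x y hxy
      have h1 : σ.symm x ≤ σ.symm y := by
        refine hcompat _ _ ?_
        simpa using hxy
      have h2 := hσ.monotone h1
      simpa using h2
  have hdisj' : Pairwise (Function.onFun Disjoint fun s : Lin => S s.1) :=
    fun s t hst => hdisj (fun h => hst (Subtype.ext h))
  have hcount : Nat.card Lin = Fintype.card Lin := Nat.card_eq_fintype_card
  calc volume {f : P → ℝ | (∀ x, f x ∈ Set.Icc (0:ℝ) 1) ∧ ∀ x y, x ≤ y → f x ≤ f y}
      = volume ({f : P → ℝ | (∀ x, f x ∈ Set.Icc (0:ℝ) 1) ∧ ∀ x y, x ≤ y → f x ≤ f y} \ N) :=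
        (measure_diff_null hN).symm
    _ = ∑' σ : Lin, volume (S σ.1) := by
        rw [hOcover, measure_iUnion hdisj' (fun s => hSmeas s.1)]
    _ = (numLinExt P : ENNReal) * (1 / (n.factorial : ENNReal)) := by
        simp only [hSvol, hTval]
        rw [tsum_fintype, Finset.sum_const, Finset.card_univ, nsmul_eq_mul]
        congr 1
        rw [numLinExt, ← hcount]
    _ = (numLinExt P : ENNReal) / (Nat.factorial (Fintype.card P) : ENNReal) := by
        rw [one_div, div_eq_mul_inv, hn]
end

section
/- For each linear extension of a finite poset P with p elements, given by an enumeration x_{σ(1)}, ..., x_{σ(p)}, the region R_σ = {f ∈ O(P) : f(x_{σ(1)}) ≤ f(x_{σ(2)}) ≤ ⋯ ≤ f(x_{σ(p)})} is a p-dimensional simplex whose vertices are the p+1 indicator-type functions f_k defined by f_k(x_{σ(i)}) = 0 for i ≤ k and f_k(x_{σ(i)}) = 1 for i > k, for k = 0,1,...,p. -/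
/-!
Transport along `σ` turns `R_σ` into the set of monotone sequences
`0 ≤ g₀ ≤ ⋯ ≤ g_{p-1} ≤ 1`, the order polytope of a chain; the poset constraints are implied
because `σ` is a linear extension. Evaluating `∑ₖ cₖ f_k` at `x_{σ(j)}` gives the prefix sum
`c₀ + ⋯ + c_j`. Hence every `g` is the convex combination of the `f_k` with weights the
increments of `(g₀, …, g_{p-1}, 1)`, and an affine relation `∑ cₖ f_k = 0`, `∑ cₖ = 0` has all
prefix sums, hence all coefficients, equal to zero.
-/

open Finset

section PrefixSums

variable {ι M : Type*} [AddCommGroup M]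

theorem eq_zero_of_sum_Iic_eq_zero [PartialOrder ι] [LocallyFiniteOrderBot ι] [WellFoundedLT ι]
    {c : ι → M} (h : ∀ k, ∑ i ∈ Iic k, c i = 0) (k : ι) : c k = 0 := by
  induction k using WellFoundedLT.induction with
  | ind k ih =>
    have hIio : ∑ i ∈ Iio k, c i = 0 := sum_eq_zero fun i hi => ih i (mem_Iio.1 hi)
    simpa [Iic_eq_cons_Iio, hIio] using h k

variable {n : ℕ}

def Fin.increments (g : Fin (n + 1) → M) : Fin (n + 1) → M :=
  Fin.cases (g 0) fun j => g j.succ - g j.castSucc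

theorem Fin.sum_Iic_increments (g : Fin (n + 1) → M) (k : Fin (n + 1)) :
    ∑ i ∈ Iic k, Fin.increments g i = g k := by
  induction k using Fin.induction with
  | zero =>
    have hIic : Iic (0 : Fin (n + 1)) = {0} := Iic_bot
    simp [hIic, Fin.increments]
  | succ j ih =>
    have hIio : Iio j.succ = Iic j.castSucc := by ext i; simp [Fin.le_castSucc_iff]
    rw [Iic_eq_cons_Iio, Finset.sum_cons, hIio, ih]
    simp [Fin.increments]

theorem Fin.increments_nonneg [PartialOrder M] [IsOrderedAddMonoid M] {g : Fin (n + 1) → M}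
    (h0 : 0 ≤ g 0) (hg : Monotone g) (k : Fin (n + 1)) : 0 ≤ Fin.increments g k := by
  induction k using Fin.cases with
  | zero => exact h0
  | succ j => exact sub_nonneg.2 (hg (Fin.castSucc_le_succ j))

end PrefixSums

theorem Fin.monotone_snoc {α : Type*} [Preorder α] {n : ℕ} {p : Fin n → α} {x : α}
    (hp : Monotone p) (hx : ∀ i, p i ≤ x) : Monotone (Fin.snoc p x : Fin (n + 1) → α) := by
  intro i j hij
  induction j using Fin.lastCases with
  | last => induction i using Fin.lastCases <;> simp [hx]
  | cast j =>
    induction i using Fin.lastCases with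
    | last => exact absurd hij (by simp)
    | cast i => simpa using hp (by simpa using hij)

section Chain

variable {α : Type*} {n : ℕ}

def chainPolytope (σ : Fin n ≃ α) : Set (α → ℝ) :=
  {f | (∀ x, f x ∈ Set.Icc 0 1) ∧ Monotone (f ∘ σ)}

def chainVertex (σ : Fin n ≃ α) (k : Fin (n + 1)) : α → ℝ :=
  fun x => if (σ.symm x : ℕ) < k then 0 else 1

theorem sum_smul_chainVertex_apply (σ : Fin n ≃ α) (c : Fin (n + 1) → ℝ) (j : Fin n) :
    (∑ k, c k • chainVertex σ k) (σ j) = ∑ k ∈ Iic j.castSucc, c k := by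
  have hIic : ({k | (k : ℕ) ≤ j} : Finset (Fin (n + 1))) = Iic j.castSucc := by
    ext k; simp [Fin.le_iff_val_le_val]
  simp [chainVertex, Finset.sum_apply, sum_ite, hIic]

theorem convex_chainPolytope (σ : Fin n ≃ α) : Convex ℝ (chainPolytope σ) := by
  rintro f ⟨hf01, hfmono⟩ g ⟨hg01, hgmono⟩ a b ha hb hab
  refine ⟨fun x => ?_, fun i j hij => ?_⟩
  · obtain ⟨hf0, hf1⟩ := hf01 x
    obtain ⟨hg0, hg1⟩ := hg01 x
    simp only [Pi.add_apply, Pi.smul_apply, smul_eq_mul]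
    exact ⟨by positivity, by nlinarith⟩
  · simp only [Function.comp_apply, Pi.add_apply, Pi.smul_apply, smul_eq_mul]
    gcongr
    exacts [hfmono hij, hgmono hij]

theorem chainVertex_mem_chainPolytope (σ : Fin n ≃ α) (k : Fin (n + 1)) :
    chainVertex σ k ∈ chainPolytope σ := by
  refine ⟨fun x => ?_, fun i j hij => ?_⟩
  · unfold chainVertex; split_ifs <;> simp
  · have : (i : ℕ) ≤ j := hij
    simp only [chainVertex, Function.comp_apply, Equiv.symm_apply_apply]
    split_ifs <;> first | omega | norm_num

theorem mem_convexHull_chainVertex {σ : Fin n ≃ α} {f : α → ℝ} (hf : f ∈ chainPolytope σ) :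
    f ∈ convexHull ℝ (Set.range (chainVertex σ)) := by
  obtain ⟨hf01, hfmono⟩ := hf
  set g : Fin (n + 1) → ℝ := Fin.snoc (f ∘ σ) 1
  have hg : Monotone g := Fin.monotone_snoc hfmono fun j => (hf01 (σ j)).2
  have hg0 : 0 ≤ g 0 := by
    induction (0 : Fin (n + 1)) using Fin.lastCases with
    | last => simp [g]
    | cast j => simpa [g] using (hf01 (σ j)).1
  have hf_eq : f = ∑ k, Fin.increments g k • chainVertex σ k := by
    funext x
    obtain ⟨j, rfl⟩ := σ.surjective x
    rw [sum_smul_chainVertex_apply, Fin.sum_Iic_increments]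
    simp [g]
  have hsum : ∑ k, Fin.increments g k = 1 := by
    rw [← Iic_top, Fin.top_eq_last, Fin.sum_Iic_increments]
    simp [g]
  rw [hf_eq]
  exact (convex_convexHull ℝ _).sum_mem (fun k _ => Fin.increments_nonneg hg0 hg k) hsum
    fun k _ => subset_convexHull ℝ _ ⟨k, rfl⟩

theorem convexHull_chainVertex (σ : Fin n ≃ α) :
    convexHull ℝ (Set.range (chainVertex σ)) = chainPolytope σ :=
  (convexHull_min (Set.range_subset_iff.2 (chainVertex_mem_chainPolytope σ))
    (convex_chainPolytope σ)).antisymm fun _ => mem_convexHull_chainVertex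

theorem affineIndependent_chainVertex (σ : Fin n ≃ α) :
    AffineIndependent ℝ (chainVertex σ) := by
  rw [affineIndependent_iff_of_fintype]
  intro c hc_sum hc_comb
  rw [univ.weightedVSub_eq_linear_combination hc_sum] at hc_comb
  refine eq_zero_of_sum_Iic_eq_zero fun k => ?_
  induction k using Fin.lastCases with
  | last => rwa [← Fin.top_eq_last, Iic_top]
  | cast j => rw [← sum_smul_chainVertex_apply, hc_comb, Pi.zero_apply]

end Chain

/-- For a linear extension `σ` of a finite poset `P` with `p` elements, the region
`R_σ` is the convex hull of the `p+1` step functions `f_k` (i.e. a simplex with these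
vertices), and these `p+1` points are affinely independent (so `R_σ` is a
`p`-dimensional simplex). -/
theorem Rsigma_simplex (P : Type*) [Fintype P] [PartialOrder P]
    (σ : Fin (Fintype.card P) ≃ P) (hσ : ∀ i j, σ i ≤ σ j → i ≤ j) :
    ({f : P → ℝ | (∀ x, f x ∈ Set.Icc (0:ℝ) 1) ∧ (∀ x y, x ≤ y → f x ≤ f y) ∧
        ∀ i j, i ≤ j → f (σ i) ≤ f (σ j)}
      = convexHull ℝ (Set.range fun k : Fin (Fintype.card P + 1) =>
          fun x : P => if ((σ.symm x : ℕ) < (k : ℕ)) then (0:ℝ) else 1)) ∧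
    AffineIndependent ℝ (fun k : Fin (Fintype.card P + 1) =>
      fun x : P => if ((σ.symm x : ℕ) < (k : ℕ)) then (0:ℝ) else 1) := by
  have hR : {f : P → ℝ | (∀ x, f x ∈ Set.Icc (0:ℝ) 1) ∧ (∀ x y, x ≤ y → f x ≤ f y) ∧
      ∀ i j, i ≤ j → f (σ i) ≤ f (σ j)} = chainPolytope σ := by
    ext f
    refine ⟨fun ⟨hf01, _, hfσ⟩ => ⟨hf01, fun i j => hfσ i j⟩, fun ⟨hf01, hfσ⟩ => ⟨hf01, ?_, ?_⟩⟩
    · intro x y hxy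
      simpa using hfσ (hσ (σ.symm x) (σ.symm y) (by simpa using hxy))
    · exact fun i j hij => hfσ hij
  exact ⟨hR.trans (convexHull_chainVertex σ).symm, affineIndependent_chainVertex σ⟩
end

section
/- The union of the regions R_σ over all linear extensions σ of a finite poset P equals the order polytope O(P). -/
/-!
A monotone `f : P → ℝ` is monotone along the linear extension of `P` that sorts the elements
by the pair `(f x, x)`, compared lexicographically with ties broken by any fixed linear
extension of `P`. Conversely, `f` is monotone on `P` whenever it is monotone along some linear
extension `σ`, because `σ⁻¹ : P → Fin p` is then monotone.
-/

open Function

theorem Equiv.monotone_symm_iff {ι P : Type*} [Preorder ι] [Preorder P] (σ : ι ≃ P) :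
    Monotone σ.symm ↔ ∀ i j, σ i ≤ σ j → i ≤ j := by
  refine ⟨fun h i j hij => by simpa using h hij, fun h x y hxy => h _ _ ?_⟩
  simpa using hxy

theorem exists_equiv_fin_strictMono_comp {P L : Type*} [Fintype P] [LinearOrder L] {k : P → L}
    (hk : Injective k) : ∃ σ : Fin (Fintype.card P) ≃ P, StrictMono (k ∘ σ) := by
  let e := (Fintype.equivFin P).symm
  refine ⟨(Tuple.sort (k ∘ e)).trans e, ?_⟩
  exact (Tuple.monotone_sort (k ∘ e)).strictMono_of_injective
    (hk.comp (Equiv.injective ((Tuple.sort (k ∘ e)).trans e)))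

theorem Monotone.monotone_symm_of_strictMono_comp {ι P L : Type*} [LinearOrder ι] [Preorder P]
    [Preorder L] {k : P → L} (hk : Monotone k) {σ : ι ≃ P} (hσ : StrictMono (k ∘ σ)) :
    Monotone σ.symm :=
  fun x y hxy => hσ.le_iff_le.1 (by simpa using hk hxy)

theorem Monotone.exists_linearExtension_monotone_comp {P α : Type*} [Fintype P] [PartialOrder P]
    [LinearOrder α] {f : P → α} (hf : Monotone f) :
    ∃ σ : Fin (Fintype.card P) ≃ P, Monotone σ.symm ∧ Monotone (f ∘ σ) := by
  let k : P → α ×ₗ LinearExtension P := fun x => toLex (f x, toLinearExtension x)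
  have hk_mono : Monotone k := Prod.Lex.toLex_mono.comp (hf.prodMk toLinearExtension.monotone)
  -- `toLinearExtension` is the identity on the underlying type
  have hk_inj : Injective k := fun x y hxy => congrArg (Prod.snd ∘ ofLex) hxy
  obtain ⟨σ, hσ⟩ := exists_equiv_fin_strictMono_comp hk_inj
  exact ⟨σ, hk_mono.monotone_symm_of_strictMono_comp hσ,
    Prod.Lex.monotone_fst_ofLex.comp hσ.monotone⟩

/-- The union of the regions `R_σ` over all linear extensions `σ` of a finite poset `P`
equals the order polytope `O(P)`. -/
theorem union_Rsigma_eq_orderPolytope (P : Type*) [Fintype P] [PartialOrder P] :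
    (⋃ σ : {σ : Fin (Fintype.card P) ≃ P // ∀ i j, σ i ≤ σ j → i ≤ j},
        {f : P → ℝ | (∀ x, f x ∈ Set.Icc (0:ℝ) 1) ∧
          ∀ i j, i ≤ j → f (σ.1 i) ≤ f (σ.1 j)})
      = {f : P → ℝ | (∀ x, f x ∈ Set.Icc (0:ℝ) 1) ∧ ∀ x y, x ≤ y → f x ≤ f y} := by
  ext f
  simp only [Set.mem_iUnion, Set.mem_ofPred_eq]
  constructor
  · rintro ⟨⟨σ, hσ⟩, hbound, hfσ⟩
    have hf : Monotone ((f ∘ σ) ∘ σ.symm) :=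
      (show Monotone (f ∘ σ) from hfσ).comp (σ.monotone_symm_iff.2 hσ)
    exact ⟨hbound, fun x y hxy => by simpa using hf hxy⟩
  · rintro ⟨hbound, hf⟩
    obtain ⟨σ, hσ, hfσ⟩ := Monotone.exists_linearExtension_monotone_comp (f := f) hf
    exact ⟨⟨σ, σ.monotone_symm_iff.1 hσ⟩, hbound, hfσ⟩
end

section
/- Let T be a two-layer subposet of the Boolean lattice (upper layer: sets of cardinality ℓ; lower layer: sets of cardinality ℓ−1, ordered by inclusion). If T is closed under intersection (for any two distinct upper nodes x, x', the set x ∩ x' belongs to the lower layer) and balanced (all upper nodes have the same number of successors), then T is regular (n_x is the same function for all upper nodes x). -/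
variable {N : Type*} [DecidableEq N]

/-- Predecessors of a lower node `y`: upper nodes strictly containing `y`. -/
def precs (Upper : Finset (Finset N)) (y : Finset N) : Finset (Finset N) :=
  Upper.filter fun x => y ⊂ x

/-- `f_x(y) = |prec(y)|` if `y ∈ succ(x)`, and `0` otherwise. -/
def fx (Upper : Finset (Finset N)) (x y : Finset N) : ℕ :=
  if y ⊂ x then (precs Upper y).card else 0

/-- `n_x(r)` is the number of lower nodes `y` with `f_x(y) = r`. -/
def nx (Upper Lower : Finset (Finset N)) (x : Finset N) (r : ℕ) : ℕ :=
  (Lower.filter fun y => fx Upper x y = r).card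

/-! Two distinct upper nodes share exactly one successor, their intersection. If a lower node
`y₀` lies below three upper nodes, then every upper node contains `y₀`, and `y₀` is the only
successor of any upper node that has another predecessor. Otherwise every lower node lies below
at most two upper nodes, and `w ↦ x ∩ w` maps the other upper nodes bijectively onto the shared
successors of `x`. Either way the values `≥ 2` of `f_x` are distributed independently of `x`,
and balancedness takes care of the values `0` and `1`. -/

open Finset

namespace Finset

variable {α : Type*} [DecidableEq α]

theorem inter_ssubset_left_of_card_eq {x w : Finset α} (hxw : x ≠ w) (hcard : #x = #w) :
    x ∩ w ⊂ x :=
  inter_subset_left.ssubset_of_ne fun h =>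
    hxw (eq_of_subset_of_card_le (inter_eq_left.1 h) hcard.ge)

/-- For `b ∈ y \ z`, the cardinality bounds force `w.erase b ⊆ z` for every `w ∈ W`, so `w \ y`
is a singleton inside `z \ y`, which has at most two elements. -/
theorem card_le_two_of_not_subset {y z : Finset α} {W : Finset (Finset α)}
    (hz : #z = #y + 1) (hyz : ¬ y ⊆ z)
    (hW : ∀ w ∈ W, y ⊆ w ∧ #w = #y + 1 ∧ #y ≤ #(z ∩ w)) : #W ≤ 2 := by
  obtain ⟨b, hby, hbz⟩ := not_subset.1 hyz
  have herase : ∀ w ∈ W, w.erase b ⊆ z := by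
    intro w hw
    obtain ⟨hyw, hw_card, hzw⟩ := hW w hw
    have hsub : z ∩ w ⊆ w.erase b := fun a ha =>
      mem_erase.2 ⟨fun hab => hbz (hab ▸ (mem_inter.1 ha).1), (mem_inter.1 ha).2⟩
    have heq : z ∩ w = w.erase b :=
      eq_of_subset_of_card_le hsub (by rw [card_erase_of_mem (hyw hby)]; omega)
    exact heq ▸ inter_subset_left
  rcases W.eq_empty_or_nonempty with rfl | ⟨w₀, hw₀⟩
  · simp
  have hzy : #(z \ y) ≤ 2 := by
    have hy_erase : y.erase b ⊆ z :=
      (erase_subset_erase b (hW w₀ hw₀).1).trans (herase w₀ hw₀)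
    calc #(z \ y) ≤ #(z \ y.erase b) :=
          card_le_card (sdiff_subset_sdiff subset_rfl (erase_subset b y))
      _ = #z - #(y.erase b) := card_sdiff_of_subset hy_erase
      _ ≤ 2 := by rw [card_erase_of_mem hby]; omega
  have hmaps : Set.MapsTo (· \ y) W ((z \ y).powersetCard 1) := by
    intro w hw
    obtain ⟨hyw, hw_card, -⟩ := hW w hw
    refine mem_powersetCard.2 ⟨fun a ha => ?_, by rw [card_sdiff_of_subset hyw]; omega⟩
    obtain ⟨haw, hay⟩ := mem_sdiff.1 ha
    exact mem_sdiff.2 ⟨herase w hw (mem_erase.2 ⟨fun hab => hay (hab ▸ hby), haw⟩), hay⟩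
  have hinj : Set.InjOn (· \ y) W := fun w₁ hw₁ w₂ hw₂ h => by
    rw [← sdiff_union_of_subset (hW w₁ hw₁).1, ← sdiff_union_of_subset (hW w₂ hw₂).1]
    exact congrArg (· ∪ y) h
  calc #W ≤ #((z \ y).powersetCard 1) := card_le_card_of_injOn _ hmaps hinj
    _ ≤ 2 := by rwa [card_powersetCard, Nat.choose_one_right]

end Finset

def succs (Lower : Finset (Finset N)) (x : Finset N) : Finset (Finset N) :=
  Lower.filter fun y => y ⊂ x

def sharedSuccs (Upper Lower : Finset (Finset N)) (x : Finset N) : Finset (Finset N) :=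
  (succs Lower x).filter fun y => 2 ≤ #(precs Upper y)

def IsInterClosed (Upper Lower : Finset (Finset N)) : Prop :=
  ∀ x ∈ Upper, ∀ x' ∈ Upper, x ≠ x' → x ∩ x' ∈ Lower

section TwoLayer

variable {Upper Lower : Finset (Finset N)} {ℓ : ℕ} {x y : Finset N}

theorem mem_precs : x ∈ precs Upper y ↔ x ∈ Upper ∧ y ⊂ x := mem_filter

theorem pair_subset_precs_inter (hU : (Upper : Set (Finset N)).Sized ℓ) {w : Finset N}
    (hx : x ∈ Upper) (hw : w ∈ Upper) (hxw : x ≠ w) : {x, w} ⊆ precs Upper (x ∩ w) := by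
  have hcard : #x = #w := by rw [hU hx, hU hw]
  refine insert_subset (mem_precs.2 ⟨hx, inter_ssubset_left_of_card_eq hxw hcard⟩)
    (singleton_subset_iff.2 (mem_precs.2 ⟨hw, ?_⟩))
  rw [inter_comm]
  exact inter_ssubset_left_of_card_eq hxw.symm hcard.symm

theorem exists_eq_inter_of_two_le_card_precs (hL : (Lower : Set (Finset N)).Sized (ℓ - 1))
    (hclosed : IsInterClosed Upper Lower) (hy : y ∈ Lower) (hx : x ∈ Upper) (hyx : y ⊂ x)
    (h2 : 2 ≤ #(precs Upper y)) : ∃ w ∈ Upper, w ≠ x ∧ y = x ∩ w := by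
  obtain ⟨w, hw, hwx⟩ := exists_mem_ne h2 x
  obtain ⟨hwU, hyw⟩ := mem_precs.1 hw
  refine ⟨w, hwU, hwx, eq_of_subset_of_card_le (subset_inter hyx.subset hyw.subset) ?_⟩
  rw [hL (hclosed x hx w hwU hwx.symm), hL hy]

theorem ssubset_of_three_le_card_precs (hU : (Upper : Set (Finset N)).Sized ℓ)
    (hL : (Lower : Set (Finset N)).Sized (ℓ - 1)) (hclosed : IsInterClosed Upper Lower)
    (hy : y ∈ Lower) (h3 : 3 ≤ #(precs Upper y)) {z : Finset N} (hz : z ∈ Upper) : y ⊂ z := by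
  obtain ⟨w₀, hw₀⟩ := card_pos.1 (by omega : 0 < #(precs Upper y))
  have hcard : #z = #y + 1 := by
    have := card_lt_card (mem_precs.1 hw₀).2
    rw [hU (mem_precs.1 hw₀).1, hL hy] at this
    rw [hU hz, hL hy]
    omega
  by_contra hyz
  have hW : ∀ w ∈ precs Upper y, y ⊆ w ∧ #w = #y + 1 ∧ #y ≤ #(z ∩ w) := by
    intro w hw
    obtain ⟨hwU, hyw⟩ := mem_precs.1 hw
    have hzw : z ≠ w := by rintro rfl; exact hyz hyw
    exact ⟨hyw.subset, by rw [hU hwU, ← hU hz, hcard],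
      by rw [hL (hclosed z hz w hwU hzw), hL hy]⟩
  have hyz' : ¬ y ⊆ z := fun h => hyz (h.ssubset_of_ne (by rintro rfl; omega))
  have := card_le_two_of_not_subset hcard hyz' hW
  omega

theorem nx_of_ne_zero {r : ℕ} (hr : r ≠ 0) :
    nx Upper Lower x r = #((succs Lower x).filter fun y => #(precs Upper y) = r) := by
  rw [nx, succs, filter_filter]
  congr 1
  refine filter_congr fun y _ => ?_
  unfold fx
  split_ifs with h <;> simp [h, hr.symm]

theorem nx_zero_add_card_succs (hx : x ∈ Upper) :
    nx Upper Lower x 0 + #(succs Lower x) = #Lower := by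
  have hzero : (Lower.filter fun y => fx Upper x y = 0) = Lower.filter fun y => ¬ y ⊂ x :=
    filter_congr fun y _ => by
      unfold fx
      split_ifs with h
      · simp [h, (card_pos.2 ⟨x, mem_precs.2 ⟨hx, h⟩⟩).ne']
      · simp [h]
  rw [nx, hzero, add_comm, succs]
  exact card_filter_add_card_filter_not _

theorem nx_one_add_card_sharedSuccs (hx : x ∈ Upper) :
    nx Upper Lower x 1 + #(sharedSuccs Upper Lower x) = #(succs Lower x) := by
  have hshared : sharedSuccs Upper Lower x =
      (succs Lower x).filter fun y => ¬ #(precs Upper y) = 1 :=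
    filter_congr fun y hy => by
      have := card_pos.2 ⟨x, mem_precs.2 ⟨hx, (mem_filter.1 hy).2⟩⟩
      omega
  rw [nx_of_ne_zero one_ne_zero, hshared]
  exact card_filter_add_card_filter_not _

theorem nx_of_two_le {r : ℕ} (hr : 2 ≤ r) :
    nx Upper Lower x r = #((sharedSuccs Upper Lower x).filter fun y => #(precs Upper y) = r) := by
  rw [nx_of_ne_zero (by omega), sharedSuccs, filter_filter]
  congr 1
  exact filter_congr fun y _ => by omega

theorem sharedSuccs_eq_singleton (hU : (Upper : Set (Finset N)).Sized ℓ)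
    (hL : (Lower : Set (Finset N)).Sized (ℓ - 1)) (hclosed : IsInterClosed Upper Lower)
    {y₀ : Finset N} (hy₀ : y₀ ∈ Lower) (h3 : 3 ≤ #(precs Upper y₀)) (hx : x ∈ Upper) :
    sharedSuccs Upper Lower x = {y₀} := by
  have hcore {z : Finset N} (hz : z ∈ Upper) : y₀ ⊂ z :=
    ssubset_of_three_le_card_precs hU hL hclosed hy₀ h3 hz
  refine eq_singleton_iff_unique_mem.2
    ⟨mem_filter.2 ⟨mem_filter.2 ⟨hy₀, hcore hx⟩, by omega⟩, fun y hy => ?_⟩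
  obtain ⟨hy, h2⟩ := mem_filter.1 hy
  obtain ⟨hyL, hyx⟩ := mem_filter.1 hy
  obtain ⟨w, hw, -, rfl⟩ := exists_eq_inter_of_two_le_card_precs hL hclosed hyL hx hyx h2
  refine (eq_of_subset_of_card_le (subset_inter (hcore hx).subset (hcore hw).subset) ?_).symm
  rw [hL hyL, hL hy₀]

theorem image_inter_erase_eq_sharedSuccs (hU : (Upper : Set (Finset N)).Sized ℓ)
    (hL : (Lower : Set (Finset N)).Sized (ℓ - 1)) (hclosed : IsInterClosed Upper Lower)
    (hx : x ∈ Upper) : (Upper.erase x).image (x ∩ ·) = sharedSuccs Upper Lower x := by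
  ext y
  simp only [mem_image, mem_erase, sharedSuccs, succs, mem_filter]
  constructor
  · rintro ⟨w, ⟨hwx, hw⟩, rfl⟩
    have hpair := pair_subset_precs_inter hU hx hw hwx.symm
    refine ⟨⟨hclosed x hx w hw hwx.symm, (mem_precs.1 (hpair (mem_insert_self x {w}))).2⟩, ?_⟩
    simpa [card_pair hwx.symm] using card_le_card hpair
  · rintro ⟨⟨hyL, hyx⟩, h2⟩
    obtain ⟨w, hw, hwx, rfl⟩ := exists_eq_inter_of_two_le_card_precs hL hclosed hyL hx hyx h2
    exact ⟨w, ⟨hwx, hw⟩, rfl⟩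

theorem injOn_inter_erase (hU : (Upper : Set (Finset N)).Sized ℓ)
    (hclosed : IsInterClosed Upper Lower) (h2 : ∀ y ∈ Lower, #(precs Upper y) ≤ 2)
    (hx : x ∈ Upper) : Set.InjOn (x ∩ ·) (Upper.erase x) := by
  intro w₁ hw₁ w₂ hw₂ (h : x ∩ w₁ = x ∩ w₂)
  obtain ⟨hw₁x, hw₁⟩ := mem_erase.1 hw₁
  obtain ⟨hw₂x, hw₂⟩ := mem_erase.1 hw₂
  by_contra hne
  have hpair₁ := pair_subset_precs_inter hU hx hw₁ hw₁x.symm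
  have hpair₂ : {x, w₂} ⊆ precs Upper (x ∩ w₁) := h ▸ pair_subset_precs_inter hU hx hw₂ hw₂x.symm
  have hsub : {x, w₁, w₂} ⊆ precs Upper (x ∩ w₁) :=
    insert_subset (hpair₁ (mem_insert_self x {w₁}))
      (insert_subset (hpair₁ (by simp)) (singleton_subset_iff.2 (hpair₂ (by simp))))
  have := card_le_card hsub
  rw [card_insert_of_notMem (by simp [hw₁x.symm, hw₂x.symm]), card_pair hne] at this
  have := h2 _ (hclosed x hx w₁ hw₁ hw₁x.symm)
  omega

theorem card_sharedSuccs (hU : (Upper : Set (Finset N)).Sized ℓ)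
    (hL : (Lower : Set (Finset N)).Sized (ℓ - 1)) (hclosed : IsInterClosed Upper Lower)
    (h2 : ∀ y ∈ Lower, #(precs Upper y) ≤ 2) (hx : x ∈ Upper) :
    #(sharedSuccs Upper Lower x) = #Upper - 1 := by
  rw [← image_inter_erase_eq_sharedSuccs hU hL hclosed hx,
    card_image_of_injOn (injOn_inter_erase hU hclosed h2 hx), card_erase_of_mem hx]

theorem card_sharedSuccs_eq_and_card_filter_eq (hU : (Upper : Set (Finset N)).Sized ℓ)
    (hL : (Lower : Set (Finset N)).Sized (ℓ - 1)) (hclosed : IsInterClosed Upper Lower)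
    {x' : Finset N} (hx : x ∈ Upper) (hx' : x' ∈ Upper) :
    #(sharedSuccs Upper Lower x) = #(sharedSuccs Upper Lower x') ∧
      ∀ r, #((sharedSuccs Upper Lower x).filter fun y => #(precs Upper y) = r) =
        #((sharedSuccs Upper Lower x').filter fun y => #(precs Upper y) = r) := by
  by_cases hsunflower : ∃ y₀ ∈ Lower, 3 ≤ #(precs Upper y₀)
  · obtain ⟨y₀, hy₀, h3⟩ := hsunflower
    rw [sharedSuccs_eq_singleton hU hL hclosed hy₀ h3 hx,
      sharedSuccs_eq_singleton hU hL hclosed hy₀ h3 hx']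
    exact ⟨rfl, fun _ => rfl⟩
  push Not at hsunflower
  have h2 : ∀ y ∈ Lower, #(precs Upper y) ≤ 2 := fun y hy => Nat.le_of_lt_succ (hsunflower y hy)
  have hcard_two {z : Finset N} : ∀ y ∈ sharedSuccs Upper Lower z, #(precs Upper y) = 2 :=
    fun y hy => le_antisymm (h2 y (mem_filter.1 (mem_filter.1 hy).1).1) (mem_filter.1 hy).2
  have hcard := (card_sharedSuccs hU hL hclosed h2 hx).trans
    (card_sharedSuccs hU hL hclosed h2 hx').symm
  refine ⟨hcard, fun r => ?_⟩
  rcases eq_or_ne r 2 with rfl | hr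
  · rwa [filter_true_of_mem hcard_two, filter_true_of_mem hcard_two]
  · rw [filter_false_of_mem fun y hy => (hcard_two y hy).trans_ne hr.symm,
      filter_false_of_mem fun y hy => (hcard_two y hy).trans_ne hr.symm]

end TwoLayer

theorem closed_balanced_implies_regular_general (Upper Lower : Finset (Finset N)) (ℓ : ℕ)
    (hU : ∀ x ∈ Upper, x.card = ℓ) (hL : ∀ y ∈ Lower, y.card = ℓ - 1)
    (hclosed : ∀ x ∈ Upper, ∀ x' ∈ Upper, x ≠ x' → x ∩ x' ∈ Lower)
    (hbal : ∀ x ∈ Upper, ∀ x' ∈ Upper,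
      (Lower.filter fun y => y ⊂ x).card = (Lower.filter fun y => y ⊂ x').card) :
    ∀ x ∈ Upper, ∀ x' ∈ Upper, ∀ r, nx Upper Lower x r = nx Upper Lower x' r := by
  intro x hx x' hx' r
  have hsuccs : #(succs Lower x) = #(succs Lower x') := hbal x hx x' hx'
  obtain ⟨hshared, hfilter⟩ := card_sharedSuccs_eq_and_card_filter_eq
    (fun _ hz => hU _ hz) (fun _ hy => hL _ hy) hclosed hx hx'
  match r with
  | 0 =>
    have := nx_zero_add_card_succs (Lower := Lower) hx
    have := nx_zero_add_card_succs (Lower := Lower) hx'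
    omega
  | 1 =>
    have := nx_one_add_card_sharedSuccs (Lower := Lower) hx
    have := nx_one_add_card_sharedSuccs (Lower := Lower) hx'
    omega
  | r + 2 => rw [nx_of_two_le le_add_self, nx_of_two_le le_add_self, hfilter]

/-- If a two-layer subposet of the Boolean lattice is closed under intersection and
balanced, then it is regular: `n_x` is the same function for all upper nodes `x`. -/
theorem closed_balanced_implies_regular (Upper Lower : Finset (Finset N)) (ℓ : ℕ)
    (hℓ : 2 ≤ ℓ)
    (hU : ∀ x ∈ Upper, x.card = ℓ) (hL : ∀ y ∈ Lower, y.card = ℓ - 1)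
    (hclosed : ∀ x ∈ Upper, ∀ x' ∈ Upper, x ≠ x' → x ∩ x' ∈ Lower)
    (hbal : ∀ x ∈ Upper, ∀ x' ∈ Upper,
      (Lower.filter fun y => y ⊂ x).card = (Lower.filter fun y => y ⊂ x').card) :
    ∀ x ∈ Upper, ∀ x' ∈ Upper, ∀ r, nx Upper Lower x r = nx Upper Lower x' r :=
  closed_balanced_implies_regular_general Upper Lower ℓ hU hL hclosed hbal
end

section
/- Let T be a two-layer subposet of the Boolean lattice closed under intersection with h ≥ 2 upper nodes of cardinality ℓ, and suppose every lower node has at most 2 predecessors (Situation 1). Let N' be the union of all upper nodes. Then ℓ = |N'| − 1 (every upper node has the form N' \ {i}), and the lower layer contains exactly h(h−1)/2 nodes having exactly 2 predecessors. -/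
/-!
Take two distinct upper nodes `x₀, x₁`; they meet in `ℓ - 1` points, so `|x₀ ∪ x₁| = ℓ + 1`.
If another upper node `x` were not contained in `x₀ ∪ x₁`, then `x ∩ x₀` and `x ∩ x₁` would both
equal `x ∩ (x₀ ∪ x₁)` by counting, forcing `x₀ ∩ x₁ ⊆ x`; the lower node `x₀ ∩ x₁` would then have
the three predecessors `x, x₀, x₁`. Hence `N' = x₀ ∪ x₁` has `ℓ + 1` elements. Finally
`y ↦ precs y` is a bijection from the lower nodes with two predecessors onto the pairs of upper
nodes, with inverse `{a, b} ↦ a ∩ b`.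
-/

variable {N : Type*} [DecidableEq N]

namespace Finset

variable {α : Type*} [DecidableEq α]

theorem inter_ssubset_left_of_ne_of_card_eq {x x' : Finset α} (hne : x ≠ x')
    (hcard : x.card = x'.card) : x ∩ x' ⊂ x := by
  refine ssubset_iff_subset_ne.mpr ⟨inter_subset_left, fun h => hne ?_⟩
  exact eq_of_subset_of_card_le (inter_eq_left.mp h) hcard.ge

theorem inter_subset_of_not_subset_union {x a b : Finset α} (hx : ¬x ⊆ a ∪ b)
    (ha : x.card ≤ (x ∩ a).card + 1) (hb : x.card ≤ (x ∩ b).card + 1)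
    (hab : (a ∩ b).card ≤ (x ∩ a).card) : a ∩ b ⊆ x := by
  have hlt : (x ∩ (a ∪ b)).card < x.card :=
    card_lt_card (ssubset_iff_subset_ne.mpr ⟨inter_subset_left, fun h => hx (inter_eq_left.mp h)⟩)
  have hxa : x ∩ a = x ∩ (a ∪ b) :=
    eq_of_subset_of_card_le (inter_subset_inter_left subset_union_left) (by omega)
  have hxb : x ∩ b = x ∩ (a ∪ b) :=
    eq_of_subset_of_card_le (inter_subset_inter_left subset_union_right) (by omega)
  have hxa_sub : x ∩ a ⊆ a ∩ b := fun t ht =>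
    mem_inter.mpr ⟨(mem_inter.mp ht).2, (mem_inter.mp (hxb ▸ hxa ▸ ht)).2⟩
  rw [← eq_of_subset_of_card_le hxa_sub hab]
  exact inter_subset_left

theorem exists_eq_erase_of_card_eq_succ {x s : Finset α} (hxs : x ⊆ s)
    (hcard : s.card = x.card + 1) : ∃ i ∈ s, x = s.erase i := by
  obtain ⟨i, hi, rfl⟩ := exists_eq_insert_iff.mpr ⟨hxs, hcard.symm⟩
  exact ⟨i, mem_insert_self i x, (erase_insert hi).symm⟩

end Finset

open Finset

variable {Upper Lower : Finset (Finset N)} {ℓ : ℕ}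

theorem mem_precs_inter (hU : ∀ x ∈ Upper, x.card = ℓ) {a b x : Finset N} (ha : a ∈ Upper)
    (hb : b ∈ Upper) (hab : a ≠ b) (hx : x ∈ Upper) (hsub : a ∩ b ⊆ x) :
    x ∈ precs Upper (a ∩ b) := by
  have hlt := card_lt_card (inter_ssubset_left_of_ne_of_card_eq hab (by rw [hU a ha, hU b hb]))
  refine mem_filter.mpr ⟨hx, Finset.ssubset_iff_subset_ne.mpr ⟨hsub, ?_⟩⟩
  rintro rfl
  rw [hU a ha, hU _ hx] at hlt
  exact lt_irrefl _ hlt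

theorem precs_inter_eq_pair (hU : ∀ x ∈ Upper, x.card = ℓ)
    (hclosed : ∀ x ∈ Upper, ∀ x' ∈ Upper, x ≠ x' → x ∩ x' ∈ Lower)
    (hsit1 : ∀ y ∈ Lower, (precs Upper y).card ≤ 2) {a b : Finset N} (ha : a ∈ Upper)
    (hb : b ∈ Upper) (hab : a ≠ b) : precs Upper (a ∩ b) = {a, b} := by
  have hpair : {a, b} ⊆ precs Upper (a ∩ b) := by
    rw [insert_subset_iff, singleton_subset_iff]
    exact ⟨mem_precs_inter hU ha hb hab ha inter_subset_left,
      mem_precs_inter hU ha hb hab hb inter_subset_right⟩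
  refine (eq_of_subset_of_card_le hpair ?_).symm
  rw [card_pair hab]
  exact hsit1 _ (hclosed a ha b hb hab)

theorem eq_inter_of_precs_eq_pair (hL : ∀ y ∈ Lower, y.card = ℓ - 1)
    (hclosed : ∀ x ∈ Upper, ∀ x' ∈ Upper, x ≠ x' → x ∩ x' ∈ Lower) {y a b : Finset N}
    (hy : y ∈ Lower) (hab : a ≠ b) (hprecs : precs Upper y = {a, b}) : y = a ∩ b := by
  have ha := mem_filter.mp (hprecs ▸ mem_insert_self a {b} : a ∈ precs Upper y)
  have hb := mem_filter.mp (hprecs ▸ mem_insert_of_mem (mem_singleton_self b) : b ∈ precs Upper y)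
  refine eq_of_subset_of_card_le (subset_inter ha.2.subset hb.2.subset) ?_
  rw [hL _ (hclosed a ha.1 b hb.1 hab), hL y hy]

theorem subset_union_of_card_precs_le_two (hU : ∀ x ∈ Upper, x.card = ℓ)
    (hL : ∀ y ∈ Lower, y.card = ℓ - 1)
    (hclosed : ∀ x ∈ Upper, ∀ x' ∈ Upper, x ≠ x' → x ∩ x' ∈ Lower)
    (hsit1 : ∀ y ∈ Lower, (precs Upper y).card ≤ 2) {x₀ x₁ : Finset N} (hx₀ : x₀ ∈ Upper)
    (hx₁ : x₁ ∈ Upper) (hne : x₀ ≠ x₁) {x : Finset N} (hx : x ∈ Upper) : x ⊆ x₀ ∪ x₁ := by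
  by_contra hns
  have hxx₀ : x ≠ x₀ := by rintro rfl; exact hns subset_union_left
  have hxx₁ : x ≠ x₁ := by rintro rfl; exact hns subset_union_right
  have hcard : ∀ a ∈ Upper, ∀ b ∈ Upper, a ≠ b → (a ∩ b).card = ℓ - 1 :=
    fun a ha b hb hab => hL _ (hclosed a ha b hb hab)
  have hsub : x₀ ∩ x₁ ⊆ x := inter_subset_of_not_subset_union hns
    (by rw [hU x hx, hcard x hx x₀ hx₀ hxx₀]; omega)
    (by rw [hU x hx, hcard x hx x₁ hx₁ hxx₁]; omega)
    (by rw [hcard x hx x₀ hx₀ hxx₀, hcard x₀ hx₀ x₁ hx₁ hne])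
  have htriple : {x, x₀, x₁} ⊆ precs Upper (x₀ ∩ x₁) := by
    simp only [insert_subset_iff, singleton_subset_iff]
    exact ⟨mem_precs_inter hU hx₀ hx₁ hne hx hsub,
      mem_precs_inter hU hx₀ hx₁ hne hx₀ inter_subset_left,
      mem_precs_inter hU hx₀ hx₁ hne hx₁ inter_subset_right⟩
  have h3 : ({x, x₀, x₁} : Finset (Finset N)).card = 3 := by
    rw [card_insert_of_notMem (by simp [hxx₀, hxx₁]), card_pair hne]
  have := (card_le_card htriple).trans (hsit1 _ (hclosed x₀ hx₀ x₁ hx₁ hne))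
  omega

theorem card_filter_card_precs_eq_two (hU : ∀ x ∈ Upper, x.card = ℓ)
    (hL : ∀ y ∈ Lower, y.card = ℓ - 1)
    (hclosed : ∀ x ∈ Upper, ∀ x' ∈ Upper, x ≠ x' → x ∩ x' ∈ Lower)
    (hsit1 : ∀ y ∈ Lower, (precs Upper y).card ≤ 2) :
    (Lower.filter fun y => (precs Upper y).card = 2).card = Upper.card.choose 2 := by
  rw [← card_powersetCard]
  refine card_bij (fun y _ => precs Upper y) ?_ ?_ ?_
  · intro y hy
    exact mem_powersetCard.mpr ⟨filter_subset _ _, (mem_filter.mp hy).2⟩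
  · intro y hy y' hy' hprecs
    obtain ⟨a, b, hab, hpair⟩ := card_eq_two.mp (mem_filter.mp hy).2
    rw [eq_inter_of_precs_eq_pair hL hclosed (mem_filter.mp hy).1 hab hpair,
      eq_inter_of_precs_eq_pair hL hclosed (mem_filter.mp hy').1 hab (hprecs ▸ hpair)]
  · intro p hp
    obtain ⟨hpU, hp2⟩ := mem_powersetCard.mp hp
    obtain ⟨a, b, hab, rfl⟩ := card_eq_two.mp hp2
    have ha : a ∈ Upper := hpU (mem_insert_self a {b})
    have hb : b ∈ Upper := hpU (mem_insert_of_mem (mem_singleton_self b))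
    have hprecs := precs_inter_eq_pair hU hclosed hsit1 ha hb hab
    exact ⟨a ∩ b, mem_filter.mpr ⟨hclosed a ha b hb hab, by rw [hprecs, card_pair hab]⟩, hprecs⟩

theorem situation1_characterization_general (Upper Lower : Finset (Finset N)) (ℓ : ℕ)
    (hU : ∀ x ∈ Upper, x.card = ℓ) (hL : ∀ y ∈ Lower, y.card = ℓ - 1)
    (hclosed : ∀ x ∈ Upper, ∀ x' ∈ Upper, x ≠ x' → x ∩ x' ∈ Lower)
    (hh : 2 ≤ Upper.card)
    (hsit1 : ∀ y ∈ Lower, (precs Upper y).card ≤ 2) :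
    ℓ = (Upper.sup id).card - 1 ∧
    (∀ x ∈ Upper, ∃ i ∈ Upper.sup id, x = (Upper.sup id).erase i) ∧
    (Lower.filter fun y => (precs Upper y).card = 2).card
      = Upper.card * (Upper.card - 1) / 2 := by
  obtain ⟨x₀, hx₀, x₁, hx₁, hne⟩ := one_lt_card.mp hh
  have hsup : Upper.sup id = x₀ ∪ x₁ := by
    refine (Finset.sup_le fun x hx => ?_).antisymm
      (union_subset (le_sup (f := id) hx₀) (le_sup (f := id) hx₁))
    exact subset_union_of_card_precs_le_two hU hL hclosed hsit1 hx₀ hx₁ hne hx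
  have hcard : (Upper.sup id).card = ℓ + 1 := by
    have hinter := hL _ (hclosed x₀ hx₀ x₁ hx₁ hne)
    have hlt := card_lt_card (inter_ssubset_left_of_ne_of_card_eq hne (by rw [hU _ hx₀, hU _ hx₁]))
    have hunion := card_union_add_card_inter x₀ x₁
    rw [hU _ hx₀] at hlt
    rw [hU _ hx₀, hU _ hx₁] at hunion
    rw [hsup]
    omega
  refine ⟨by omega, fun x hx => ?_, ?_⟩
  · exact exists_eq_erase_of_card_eq_succ (le_sup (f := id) hx) (by rw [hcard, hU x hx])
  · rw [card_filter_card_precs_eq_two hU hL hclosed hsit1, Nat.choose_two_right]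

/-- Situation 1: a two-layer subposet closed under intersection with `h ≥ 2` upper nodes of
cardinality `ℓ`, in which every lower node has at most `2` predecessors. Then, with
`N' = ⋃ upper nodes`, one has `ℓ = |N'| − 1` (every upper node is of the form `N' \ {i}`)
and exactly `h(h−1)/2` lower nodes have exactly `2` predecessors. -/
theorem situation1_characterization (Upper Lower : Finset (Finset N)) (ℓ : ℕ)
    (hℓ : 2 ≤ ℓ)
    (hU : ∀ x ∈ Upper, x.card = ℓ) (hL : ∀ y ∈ Lower, y.card = ℓ - 1)
    (hclosed : ∀ x ∈ Upper, ∀ x' ∈ Upper, x ≠ x' → x ∩ x' ∈ Lower)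
    (hh : 2 ≤ Upper.card)
    (hsit1 : ∀ y ∈ Lower, (precs Upper y).card ≤ 2) :
    ℓ = (Upper.sup id).card - 1 ∧
    (∀ x ∈ Upper, ∃ i ∈ Upper.sup id, x = (Upper.sup id).erase i) ∧
    (Lower.filter fun y => (precs Upper y).card = 2).card
      = Upper.card * (Upper.card - 1) / 2 :=
  situation1_characterization_general Upper Lower ℓ hU hL hclosed hh hsit1
end

section
/- Let T be a two-layer subposet of the Boolean lattice closed under intersection with h ≥ 3 upper nodes of cardinality ℓ, and suppose some lower node S has exactly h predecessors (Situation 2). Let N' be the union of all upper nodes with |N'| = n'. Then h = n' − ℓ + 1, ℓ < n' − 1, every upper node is of the form S ∪ {i} with i ∈ N' \ S, and every lower node other than S has 0 or 1 predecessors. -/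
/-!
Since `S` has every upper node as a predecessor and `|S| = ℓ - 1`, each upper node covers `S`,
i.e. is `insert i S` for a unique `i ∉ S`. Hence the upper nodes correspond bijectively to the
points of `N' \ S`, which gives `h = n' - (ℓ - 1)`, and `ℓ < n' - 1` follows from `h ≥ 3`.
Two distinct covers of `S` meet exactly in `S`, so a lower node with two predecessors lies
in `S` and, having the same size, equals `S`.
-/

variable {N : Type*} [DecidableEq N]

open Finset

theorem CovBy.inf_eq_of_ne {α : Type*} [SemilatticeInf α] {a b c : α}
    (hab : a ⋖ b) (hac : a ⋖ c) (hbc : b ≠ c) : b ⊓ c = a := by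
  refine (hab.eq_or_eq (le_inf hab.le hac.le) inf_le_left).resolve_right fun hb => hbc ?_
  have hbc_le : b ≤ c := hb ▸ inf_le_right
  exact (hac.eq_or_eq hab.le hbc_le).resolve_left hab.ne'

namespace Finset

theorem covBy_of_ssubset_of_card_eq {s t : Finset N} (hst : s ⊂ t) (hcard : #t = #s + 1) :
    s ⋖ t :=
  covBy_iff_exists_insert.2 (exists_eq_insert_iff.2 ⟨hst.subset, hcard.symm⟩)

theorem image_insert_sup_sdiff {U : Finset (Finset N)} {S : Finset N}
    (hcov : ∀ x ∈ U, S ⋖ x) : ((U.sup id) \ S).image (insert · S) = U := by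
  ext x
  simp only [mem_image, mem_sdiff, mem_sup, id]
  constructor
  · rintro ⟨i, ⟨⟨x', hx', hix'⟩, hiS⟩, rfl⟩
    obtain ⟨j, hjS, rfl⟩ := (hcov x' hx').exists_finset_insert
    rwa [(mem_insert.1 hix').resolve_right hiS]
  · intro hx
    obtain ⟨i, hiS, rfl⟩ := (hcov x hx).exists_finset_insert
    exact ⟨i, ⟨⟨_, hx, mem_insert_self i S⟩, hiS⟩, rfl⟩

theorem card_eq_card_sup_sdiff {U : Finset (Finset N)} {S : Finset N}
    (hcov : ∀ x ∈ U, S ⋖ x) : #U = #((U.sup id) \ S) := by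
  conv_lhs => rw [← image_insert_sup_sdiff hcov]
  refine card_image_of_injOn fun i hi j _ hij => ?_
  exact (insert_inj (mem_sdiff.1 hi).2).1 hij

theorem card_sup_eq_card_add_card {U : Finset (Finset N)} {S : Finset N}
    (hcov : ∀ x ∈ U, S ⋖ x) (hU : U.Nonempty) : #(U.sup id) = #U + #S := by
  obtain ⟨x, hx⟩ := hU
  have hS : S ⊆ U.sup id := (hcov x hx).le.trans (le_sup (f := id) hx)
  rw [card_eq_card_sup_sdiff hcov, card_sdiff_add_card_eq_card hS]

end Finset

theorem ssubset_of_card_precs_eq {U : Finset (Finset N)} {S x : Finset N}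
    (hS : #(precs U S) = #U) (hx : x ∈ U) : S ⊂ x :=
  filter_card_eq hS x hx

theorem card_precs_le_one {U : Finset (Finset N)} {S y : Finset N}
    (hcov : ∀ x ∈ U, S ⋖ x) (hy : #y = #S) (hyS : y ≠ S) : #(precs U y) ≤ 1 := by
  refine card_le_one.2 fun x hx x' hx' => by_contra fun hne => hyS ?_
  rw [precs, mem_filter] at hx hx'
  have hsub : y ⊆ S := by
    rw [← (hcov x hx.1).inf_eq_of_ne (hcov x' hx'.1) hne]
    exact subset_inter hx.2.subset hx'.2.subset
  exact eq_of_subset_of_card_le hsub hy.ge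

theorem situation2_characterization_general (Upper Lower : Finset (Finset N)) (ℓ : ℕ)
    (hℓ : 2 ≤ ℓ)
    (hU : ∀ x ∈ Upper, x.card = ℓ) (hL : ∀ y ∈ Lower, y.card = ℓ - 1)
    (hh : 3 ≤ Upper.card)
    (S : Finset N) (hS : S ∈ Lower) (hSprec : (precs Upper S).card = Upper.card) :
    Upper.card = (Upper.sup id).card - ℓ + 1 ∧
    ℓ < (Upper.sup id).card - 1 ∧
    (∀ x ∈ Upper, ∃ i ∈ (Upper.sup id) \ S, x = insert i S) ∧
    (∀ y ∈ Lower, y ≠ S → (precs Upper y).card ≤ 1) := by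
  have hScard := hL S hS
  have hcov : ∀ x ∈ Upper, S ⋖ x := fun x hx =>
    covBy_of_ssubset_of_card_eq (ssubset_of_card_precs_eq hSprec hx)
      (by rw [hU x hx, hScard]; omega)
  have hsup := card_sup_eq_card_add_card hcov (card_pos.1 (by omega))
  refine ⟨by omega, by omega, fun x hx => ?_, fun y hy hyS =>
    card_precs_le_one hcov (by rw [hL y hy, hScard]) hyS⟩
  rw [← image_insert_sup_sdiff hcov, mem_image] at hx
  obtain ⟨i, hi, rfl⟩ := hx
  exact ⟨i, hi, rfl⟩

/-- Situation 2: a two-layer subposet closed under intersection with `h ≥ 3` upper nodes of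
cardinality `ℓ`, in which some lower node `S` has exactly `h` predecessors. Then, with
`N' = ⋃ upper nodes` and `n' = |N'|`: `h = n' − ℓ + 1`, `ℓ < n' − 1`, every upper node is
of the form `S ∪ {i}` with `i ∈ N' \ S`, and every lower node other than `S` has at most
`1` predecessor. -/
theorem situation2_characterization (Upper Lower : Finset (Finset N)) (ℓ : ℕ)
    (hℓ : 2 ≤ ℓ)
    (hU : ∀ x ∈ Upper, x.card = ℓ) (hL : ∀ y ∈ Lower, y.card = ℓ - 1)
    (hclosed : ∀ x ∈ Upper, ∀ x' ∈ Upper, x ≠ x' → x ∩ x' ∈ Lower)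
    (hh : 3 ≤ Upper.card)
    (S : Finset N) (hS : S ∈ Lower) (hSprec : (precs Upper S).card = Upper.card) :
    Upper.card = (Upper.sup id).card - ℓ + 1 ∧
    ℓ < (Upper.sup id).card - 1 ∧
    (∀ x ∈ Upper, ∃ i ∈ (Upper.sup id) \ S, x = insert i S) ∧
    (∀ y ∈ Lower, y ≠ S → (precs Upper y).card ≤ 1) :=
  situation2_characterization_general Upper Lower ℓ hℓ hU hL hh S hS hSprec
end
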